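/- Every subproduct system H_• with dim H_1 = n defines a homogeneous two-sided ideal I in the free algebra ℂ⟨z_1,…,z_n⟩ by I := { f : f(e_1,…,e_n) ∈ H^{⊗m} ⊖ H_m for some m }, and conversely every homogeneous two-sided ideal I ⊆ ℂ⟨z_1,…,z_n⟩ gives rise to a subproduct system by setting H_m := H^{⊗m} ⊖ { f(e_1,…,e_n) : f ∈ I^{(m)} }, where I^{(m)} is the degree-m component of I. -/

import Mathlib

open scoped Matrix

noncomputable section

/-- Words of length `m` in the alphabet `{1,…,n}`. -/
abbrev Wd (n m : ℕ) := Fin m → Fin n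

/-- The `m`-th full tensor power `H^{⊗m}` of `H = ℂ^n`, realized as the Euclidean
space with orthonormal basis indexed by words of length `m`. -/
abbrev TP (n m : ℕ) : Type := EuclideanSpace ℂ (Wd n m)

variable {n : ℕ}

/-- Continuous linear map associated to a (possibly rectangular) matrix. -/
def ofMatR {ι κ : Type} [Fintype ι] [Fintype κ] [DecidableEq ι] [DecidableEq κ]
    (M : Matrix ι κ ℂ) : EuclideanSpace ℂ κ →L[ℂ] EuclideanSpace ℂ ι :=
  LinearMap.toContinuousLinearMap (Matrix.toEuclideanLin M)

/-- Matrix entry of an operator in the standard basis. -/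
def ent {a : ℕ} (A : TP n a →L[ℂ] TP n a) (w v : Wd n a) : ℂ :=
  A (EuclideanSpace.single v 1) w

def wfst {m k : ℕ} (w : Wd n (m + k)) : Wd n m := fun i => w (Fin.castAdd k i)
def wsnd {m k : ℕ} (w : Wd n (m + k)) : Wd n k := fun i => w (Fin.natAdd m i)

/-- Tensor product of vectors, under the identification `H^{⊗m} ⊗ H^{⊗k} = H^{⊗(m+k)}`. -/
def tmul {m k : ℕ} (x : TP n m) (y : TP n k) : TP n (m + k) :=
  (WithLp.equiv 2 _).symm (fun w => x (wfst w) * y (wsnd w))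

/-- Tensor product of subspaces `K ⊗ L ⊆ H^{⊗(m+k)}`. -/
def tensorSub {m k : ℕ} (K : Submodule ℂ (TP n m)) (L : Submodule ℂ (TP n k)) :
    Submodule ℂ (TP n (m + k)) :=
  Submodule.span ℂ {z | ∃ x ∈ K, ∃ y ∈ L, z = tmul x y}

/-- Tensor product of operators, under `H^{⊗m} ⊗ H^{⊗k} = H^{⊗(m+k)}`. -/
def opT {m k : ℕ} (A : TP n m →L[ℂ] TP n m) (B : TP n k →L[ℂ] TP n k) :
    TP n (m + k) →L[ℂ] TP n (m + k) :=
  ofMatR (Matrix.of fun w v => ent A (wfst w) (wfst v) * ent B (wsnd w) (wsnd v))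

/-- A subproduct system: `H_0 = ℂ` and `H_{m+k} ⊆ H_m ⊗ H_k`. -/
def IsSubproduct (H : ∀ m, Submodule ℂ (TP n m)) : Prop :=
  H 0 = ⊤ ∧ ∀ m k, H (m + k) ≤ tensorSub (H m) (H k)

/-- The orthogonal projection `p_m : H^{⊗m} → H_m` (as an operator on `H^{⊗m}`). -/
def prj (H : ∀ m, Submodule ℂ (TP n m)) (m : ℕ) : TP n m →L[ℂ] TP n m :=
  (H m).subtypeL ∘L Submodule.orthogonalProjectionOnto (H m)

/-- Left creation operator `x ↦ e_j ⊗ x`. -/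
def lcreate (j : Fin n) (m : ℕ) : TP n m →L[ℂ] TP n (m + 1) :=
  ofMatR (Matrix.of fun (w : Wd n (m + 1)) (v : Wd n m) =>
    if w 0 = j ∧ (fun i : Fin m => w i.succ) = v then 1 else 0)

/-- Right creation operator `x ↦ x ⊗ e_j`. -/
def rcreate (j : Fin n) (m : ℕ) : TP n m →L[ℂ] TP n (m + 1) :=
  ofMatR (Matrix.of fun (w : Wd n (m + 1)) (v : Wd n m) =>
    if w (Fin.last m) = j ∧ (fun i : Fin m => w i.castSucc) = v then 1 else 0)

/-- Graded component of the left shift `S_j : H_m → H_{m+1}`, `φ ↦ p_{m+1}(e_j ⊗ φ)`. -/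
def lsh (H : ∀ m, Submodule ℂ (TP n m)) (j : Fin n) (m : ℕ) : TP n m →L[ℂ] TP n (m + 1) :=
  prj H (m + 1) ∘L lcreate j m ∘L prj H m

/-- Graded component of the right shift `R_j : H_m → H_{m+1}`, `φ ↦ p_{m+1}(φ ⊗ e_j)`. -/
def rsh (H : ∀ m, Submodule ℂ (TP n m)) (j : Fin n) (m : ℕ) : TP n m →L[ℂ] TP n (m + 1) :=
  prj H (m + 1) ∘L rcreate j m ∘L prj H m

/-- Iterated left shift `S_r = S_{r_1} ⋯ S_{r_d}` as a map `H_m → H_{m+d}`. -/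
def lshW (H : ∀ m, Submodule ℂ (TP n m)) (m : ℕ) :
    ∀ d, Wd n d → (TP n m →L[ℂ] TP n (m + d))
  | 0, _ => ContinuousLinearMap.id ℂ _
  | d + 1, r => lsh H (r 0) (m + d) ∘L lshW H m d (Fin.tail r)

/-- Iterated right shift `R_r = R_{r_1} ⋯ R_{r_d}` as a map `H_m → H_{m+d}`. -/
def rshW (H : ∀ m, Submodule ℂ (TP n m)) (m : ℕ) :
    ∀ d, Wd n d → (TP n m →L[ℂ] TP n (m + d))
  | 0, _ => ContinuousLinearMap.id ℂ _
  | d + 1, r => rsh H (r (Fin.last d)) (m + d) ∘L rshW H m d (Fin.init r)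

/-- Canonical unitary identification `H^{⊗a} = H^{⊗b}` for `a = b`. -/
def castTP {a b : ℕ} (h : a = b) : TP n a →L[ℂ] TP n b :=
  ofMatR (Matrix.of fun (w : Wd n b) (v : Wd n a) =>
    if (fun i => w (Fin.cast h i)) = v then 1 else 0)

/-- `S_s : H_m → H_l` for a word `s` of length `l - m`. -/
def lshWTo (H : ∀ m, Submodule ℂ (TP n m)) (m l : ℕ) (h : m ≤ l) (s : Wd n (l - m)) :
    TP n m →L[ℂ] TP n l :=
  castTP (by omega : m + (l - m) = l) ∘L lshW H m (l - m) s

/-- `R_r : H_m → H_l` for a word `r` of length `l - m`. -/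
def rshWTo (H : ∀ m, Submodule ℂ (TP n m)) (m l : ℕ) (h : m ≤ l) (r : Wd n (l - m)) :
    TP n m →L[ℂ] TP n l :=
  castTP (by omega : m + (l - m) = l) ∘L rshW H m (l - m) r

/-- Extension of an operator on `H_m` by zero to `H^{⊗m}`. -/
def extOp (H : ∀ m, Submodule ℂ (TP n m)) {m : ℕ} (A : ↥(H m) →L[ℂ] ↥(H m)) :
    TP n m →L[ℂ] TP n m :=
  (H m).subtypeL ∘L A ∘L Submodule.orthogonalProjectionOnto (H m)

/-- Compression of an operator on `H^{⊗m}` to `H_m`. -/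
def cmpOp (H : ∀ m, Submodule ℂ (TP n m)) {m : ℕ} (T : TP n m →L[ℂ] TP n m) :
    ↥(H m) →L[ℂ] ↥(H m) :=
  Submodule.orthogonalProjectionOnto (H m) ∘L T ∘L (H m).subtypeL

def tk {m l : ℕ} (h : m ≤ l) (w : Wd n l) : Wd n m := fun i => w (Fin.castLE h i)
def dr (m : ℕ) {l : ℕ} (w : Wd n l) : Wd n (l - m) :=
  fun i => w ⟨m + i.1, by have := i.isLt; omega⟩

/-- `A ⊗ B` on `H^{⊗l} = H^{⊗m} ⊗ H^{⊗(l-m)}`. -/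
def opTG {m l : ℕ} (h : m ≤ l) (A : TP n m →L[ℂ] TP n m)
    (B : TP n (l - m) →L[ℂ] TP n (l - m)) : TP n l →L[ℂ] TP n l :=
  ofMatR (Matrix.of fun w v => ent A (tk h w) (tk h v) * ent B (dr m w) (dr m v))

/-- The inductive-system map `ι_{m,l}(A) = p_l (A ⊗ 1) p_l : B(H_m) → B(H_l)`. -/
def iota (H : ∀ m, Submodule ℂ (TP n m)) {m l : ℕ} (h : m ≤ l)
    (A : ↥(H m) →L[ℂ] ↥(H m)) : ↥(H l) →L[ℂ] ↥(H l) :=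
  cmpOp H (opTG h (extOp H A) (ContinuousLinearMap.id ℂ (TP n (l - m))))

/-- The chirality-flipped inductive map `ῑ_{m,l}(A) = Σ_{|s|=l-m} S_s A S_s^* |_{H_l}`. -/
def iotabar (H : ∀ m, Submodule ℂ (TP n m)) {m l : ℕ} (h : m ≤ l)
    (A : ↥(H m) →L[ℂ] ↥(H m)) : ↥(H l) →L[ℂ] ↥(H l) :=
  cmpOp H (∑ s : Wd n (l - m),
    lshWTo H m l h s ∘L extOp H A ∘L ContinuousLinearMap.adjoint (lshWTo H m l h s))

/-- The word `j` of length one. -/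
def letter (j : Fin n) : Wd n 1 := fun _ => j

/-- `Q^{⊗m}` on `H^{⊗m}`. -/
def tpow (Q : TP n 1 →L[ℂ] TP n 1) (m : ℕ) : TP n m →L[ℂ] TP n m :=
  ofMatR (Matrix.of fun w v => ∏ i : Fin m, ent Q (letter (w i)) (letter (v i)))

/-- Diagonal entry `(Q^{⊗d})_{r,r}`. -/
def Qdg (Q : TP n 1 →L[ℂ] TP n 1) {d : ℕ} (r : Wd n d) : ℂ :=
  ∏ i, ent Q (letter (r i)) (letter (r i))

/-- Trace of an operator. -/
def trOp {E : Type*} [NormedAddCommGroup E] [Module ℂ E] (A : E →L[ℂ] E) : ℂ :=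
  LinearMap.trace ℂ E A.toLinearMap

/-- `Tr(Q_m)` where `Q_m = p_m Q^{⊗m} p_m ∈ B(H_m)`. -/
def trQ (H : ∀ m, Submodule ℂ (TP n m)) (Q : TP n 1 →L[ℂ] TP n 1) (m : ℕ) : ℂ :=
  trOp (cmpOp H (tpow Q m))

/-- The state `φ_m(A) = Tr(ρ^{(m)} A)`, `ρ^{(m)} = Q_m / Tr(Q_m)`. -/
def phiSt (H : ∀ m, Submodule ℂ (TP n m)) (Q : TP n 1 →L[ℂ] TP n 1) (m : ℕ)
    (A : ↥(H m) →L[ℂ] ↥(H m)) : ℂ :=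
  trOp (cmpOp H (tpow Q m) ∘L A) / trQ H Q m

/-- The projective-system map
`j_{l,m}(A) = (Tr Q_m / Tr Q_l) Σ_{|r|=l-m} (Q^{⊗(l-m)})_{r,r} R_r^* A R_r |_{H_m}`. -/
def jmap (H : ∀ m, Submodule ℂ (TP n m)) (Q : TP n 1 →L[ℂ] TP n 1) {m l : ℕ} (h : m ≤ l)
    (A : ↥(H l) →L[ℂ] ↥(H l)) : ↥(H m) →L[ℂ] ↥(H m) :=
  (trQ H Q m / trQ H Q l) • cmpOp H (∑ r : Wd n (l - m),
    Qdg Q r • (ContinuousLinearMap.adjoint (rshWTo H m l h r) ∘L extOp H A ∘L rshWTo H m l h r))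

/-- `ρ^{(m)} = Q_m / Tr(Q_m)`, extended by zero to `H^{⊗m}`. -/
def rhoExt (H : ∀ m, Submodule ℂ (TP n m)) (Q : TP n 1 →L[ℂ] TP n 1) (m : ℕ) :
    TP n m →L[ℂ] TP n m :=
  (trQ H Q m)⁻¹ • (prj H m ∘L tpow Q m ∘L prj H m)

/-- The normalization constant `√(Tr(Q_m)Tr(Q_k)/Tr(Q_{m+k}))`. -/
def lamC (H : ∀ m, Submodule ℂ (TP n m)) (Q : TP n 1 →L[ℂ] TP n 1) (m k : ℕ) : ℂ :=
  (trQ H Q m * trQ H Q k / trQ H Q (m + k)) ^ ((1 : ℂ) / 2)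

/-- Right tensoring `x ↦ x ⊗ y` as a continuous linear map. -/
def tensR {m k : ℕ} (y : TP n k) : TP n m →L[ℂ] TP n (m + k) :=
  ofMatR (Matrix.of fun w v => if wfst w = v then y (wsnd w) else 0)

/-- The map `V_{m,l} ψ = √(TrQ_m TrQ_{l-m}/TrQ_l) Σ_{|r|=l-m} p_l (R_r^* ψ ⊗ e_r)`,
realized as an operator on `H^{⊗(m+k)}` (with `l = m + k`). -/
def Vml (H : ∀ m, Submodule ℂ (TP n m)) (Q : TP n 1 →L[ℂ] TP n 1) (m k : ℕ) :
    TP n (m + k) →L[ℂ] TP n (m + k) :=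
  lamC H Q m k • ∑ r : Wd n k,
    prj H (m + k) ∘L tensR (EuclideanSpace.single r 1) ∘L
      ContinuousLinearMap.adjoint (rshW H m k r)

/-- The claimed adjoint `V_{m,l}^* = √(⋯) (ρ^{(l)})^{-1}(ρ^{(m)} ⊗ ρ^{(l-m)})`. -/
def VmlStar (H : ∀ m, Submodule ℂ (TP n m)) (Q : TP n 1 →L[ℂ] TP n 1) (m k : ℕ) :
    TP n (m + k) →L[ℂ] TP n (m + k) :=
  lamC H Q m k •
    (extOp H (trQ H Q (m + k) • Ring.inverse (cmpOp H (tpow Q (m + k)))) ∘L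
      opT (rhoExt H Q m) (rhoExt H Q k))

/-- The adjoint, with instances supplied explicitly. -/
def adjC {E F : Type*} [NormedAddCommGroup E] [NormedAddCommGroup F]
    [InnerProductSpace ℂ E] [InnerProductSpace ℂ F] [CompleteSpace E] [CompleteSpace F]
    (T : E →L[ℂ] F) : F →L[ℂ] E :=
  @ContinuousLinearMap.adjoint ℂ E F _ _ _ _ _ _ _ T

/-- Complete positivity of a map between operator algebras on Hilbert spaces:
positive matrices over the domain are sent to positive matrices over the codomain.
(Here `Nᴴ` is written as the transpose of the entrywise adjoint.) -/
def IsCP {E F' : Type*} [NormedAddCommGroup E] [InnerProductSpace ℂ E] [CompleteSpace E]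
    [NormedAddCommGroup F'] [InnerProductSpace ℂ F'] [CompleteSpace F']
    (Φ : (E →L[ℂ] E) → (F' →L[ℂ] F')) : Prop :=
  ∀ (d : ℕ) (M : Matrix (Fin d) (Fin d) (E →L[ℂ] E)),
    (∃ N : Matrix (Fin d) (Fin d) (E →L[ℂ] E), M = (N.map fun T => adjC T)ᵀ * N) →
    ∃ N' : Matrix (Fin d) (Fin d) (F' →L[ℂ] F'), M.map Φ = (N'.map fun T => adjC T)ᵀ * N'

/-- The vacuum vector `Ω ∈ H^{⊗0} = ℂ`. -/
def vac (n : ℕ) : TP n 0 := EuclideanSpace.single default 1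

/-- The symmetric subspace `H^{∨m} ⊆ H^{⊗m}`. -/
def symSub (n m : ℕ) : Submodule ℂ (TP n m) where
  carrier := {x | ∀ (σ : Equiv.Perm (Fin m)) (w : Wd n m), x (w ∘ σ) = x w}
  add_mem' := by
    intro a b ha hb σ w
    show (a + b) (w ∘ σ) = (a + b) w
    simp only [PiLp.add_apply, ha σ w, hb σ w]
  zero_mem' := by
    intro σ w
    show (0 : TP n m) (w ∘ σ) = (0 : TP n m) w
    simp
  smul_mem' := by
    intro c x hx σ w
    show (c • x) (w ∘ σ) = (c • x) w
    simp only [PiLp.smul_apply, hx σ w]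

/-- Rank-one operator `|x⟩⟨x|`. -/
def rankOne {F : Type*} [NormedAddCommGroup F] [InnerProductSpace ℂ F] (x : F) :
    F →L[ℂ] F :=
  (innerSL ℂ x).smulRight x

end

/-! In `H^{⊗(m+k)}` the subspaces `K ⊗ H^{⊗k} + H^{⊗m} ⊗ L` and `Kᗮ ⊗ Lᗮ` are orthogonal and
together contain every basis tensor `e_v ⊗ e_w` (split `e_v` along `K ⊕ Kᗮ` and `e_w` along
`L ⊕ Lᗮ`), so each is the orthogonal complement of the other. For an ideal this gives
`I_{m+k}ᗮ ⊆ I_mᗮ ⊗ I_kᗮ`; for a subproduct system, `x ⊥ H_m` gives `x ⊗ y ⊥ H_m ⊗ H_k ⊇ H_{m+k}`.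
In degree `0` a proper subspace of the line `H^{⊗0}` is zero. -/

open Submodule

variable {n m k : ℕ}

lemma wfst_append (a : Wd n m) (b : Wd n k) : wfst (Fin.append a b) = a :=
  funext (Fin.append_left a b)

lemma wsnd_append (a : Wd n m) (b : Wd n k) : wsnd (Fin.append a b) = b :=
  funext (Fin.append_right a b)

lemma append_wfst_wsnd (w : Wd n (m + k)) : Fin.append (wfst w) (wsnd w) = w :=
  Fin.append_castAdd_natAdd

lemma eq_append_iff (w : Wd n (m + k)) (a : Wd n m) (b : Wd n k) :
    w = Fin.append a b ↔ wfst w = a ∧ wsnd w = b := by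
  constructor
  · rintro rfl
    exact ⟨wfst_append a b, wsnd_append a b⟩
  · rintro ⟨rfl, rfl⟩
    exact (append_wfst_wsnd w).symm

lemma tmul_apply (x : TP n m) (y : TP n k) (w : Wd n (m + k)) :
    tmul x y w = x (wfst w) * y (wsnd w) := rfl

lemma tmul_add_left (x x' : TP n m) (y : TP n k) :
    tmul (x + x') y = tmul x y + tmul x' y := by
  ext w
  simp only [tmul_apply, PiLp.add_apply, add_mul]

lemma tmul_add_right (x : TP n m) (y y' : TP n k) :
    tmul x (y + y') = tmul x y + tmul x y' := by
  ext w
  simp only [tmul_apply, PiLp.add_apply, mul_add]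

lemma tmul_single (a : Wd n m) (b : Wd n k) :
    tmul (EuclideanSpace.single a (1 : ℂ)) (EuclideanSpace.single b 1) =
      EuclideanSpace.single (Fin.append a b) 1 := by
  ext w
  simp only [tmul_apply, PiLp.single_apply, eq_append_iff, ite_zero_mul_ite_zero, mul_one]

lemma inner_tmul (x u : TP n m) (y v : TP n k) :
    inner ℂ (tmul x y) (tmul u v) = inner ℂ x u * inner ℂ y v := by
  simp only [PiLp.inner_apply, Finset.sum_mul_sum, ← Fintype.sum_prod_type']
  rw [← (Fin.appendEquiv m k).symm.sum_comp]
  refine Fintype.sum_congr _ _ fun w => ?_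
  simp only [tmul_apply, RCLike.inner_apply, map_mul]
  exact mul_mul_mul_comm _ _ _ _

lemma tmul_mem_tensorSub {K : Submodule ℂ (TP n m)} {L : Submodule ℂ (TP n k)}
    {x : TP n m} {y : TP n k} (hx : x ∈ K) (hy : y ∈ L) : tmul x y ∈ tensorSub K L :=
  subset_span ⟨x, hx, y, hy, rfl⟩

lemma tensorSub_le {K : Submodule ℂ (TP n m)} {L : Submodule ℂ (TP n k)}
    {J : Submodule ℂ (TP n (m + k))} (h : ∀ x ∈ K, ∀ y ∈ L, tmul x y ∈ J) :
    tensorSub K L ≤ J :=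
  span_le.2 <| by
    rintro _ ⟨x, hx, y, hy, rfl⟩
    exact h x hx y hy

theorem Submodule.orthogonal_eq_of_isOrtho_of_sup_eq_top {𝕜 E : Type*} [RCLike 𝕜]
    [NormedAddCommGroup E] [InnerProductSpace 𝕜 E] {K B : Submodule 𝕜 E} (hKB : K ⟂ B)
    (hsup : K ⊔ B = ⊤) : Kᗮ = B :=
  calc Kᗮ = (B ⊔ K) ⊓ Kᗮ := by rw [sup_comm, hsup, top_inf_eq]
    _ = B ⊔ K ⊓ Kᗮ := sup_inf_assoc_of_le K hKB.ge
    _ = B := by rw [inf_orthogonal_eq_bot, sup_bot_eq]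

section Orthogonality

variable {K K' : Submodule ℂ (TP n m)} {L L' : Submodule ℂ (TP n k)}

lemma isOrtho_tensorSub_of_isOrtho_left (h : K ⟂ K') :
    tensorSub K L ⟂ tensorSub K' L' :=
  isOrtho_span.2 <| by
    rintro _ ⟨x, hx, y, -, rfl⟩ _ ⟨u, hu, v, -, rfl⟩
    rw [inner_tmul, h.inner_eq hx hu, zero_mul]

lemma isOrtho_tensorSub_of_isOrtho_right (h : L ⟂ L') :
    tensorSub K L ⟂ tensorSub K' L' :=
  isOrtho_span.2 <| by
    rintro _ ⟨x, -, y, hy, rfl⟩ _ ⟨u, -, v, hv, rfl⟩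
    rw [inner_tmul, h.inner_eq hy hv, mul_zero]

lemma tmul_mem_orthogonal_of_mem_orthogonal_left {J : Submodule ℂ (TP n (m + k))}
    (hJ : J ≤ tensorSub K L) {x : TP n m} (hx : x ∈ Kᗮ) (y : TP n k) : tmul x y ∈ Jᗮ :=
  orthogonal_le hJ <| (isOrtho_tensorSub_of_isOrtho_left (isOrtho_orthogonal_left K)).le
    (tmul_mem_tensorSub hx mem_top)

lemma tmul_mem_orthogonal_of_mem_orthogonal_right {J : Submodule ℂ (TP n (m + k))}
    (hJ : J ≤ tensorSub K L) {y : TP n k} (hy : y ∈ Lᗮ) (x : TP n m) : tmul x y ∈ Jᗮ :=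
  orthogonal_le hJ <| (isOrtho_tensorSub_of_isOrtho_right (isOrtho_orthogonal_left L)).le
    (tmul_mem_tensorSub mem_top hy)

lemma sup_tensorSub_orthogonal_eq_top (K : Submodule ℂ (TP n m)) (L : Submodule ℂ (TP n k)) :
    (tensorSub K ⊤ ⊔ tensorSub ⊤ L) ⊔ tensorSub Kᗮ Lᗮ = ⊤ := by
  rw [eq_top_iff, ← (EuclideanSpace.basisFun (Wd n (m + k)) ℂ).toBasis.span_eq, span_le]
  rintro _ ⟨w, rfl⟩
  obtain ⟨a, ha, a', ha', hx⟩ := K.exists_add_mem_mem_orthogonal (EuclideanSpace.single (wfst w) 1)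
  obtain ⟨b, hb, b', hb', hy⟩ := L.exists_add_mem_mem_orthogonal (EuclideanSpace.single (wsnd w) 1)
  rw [SetLike.mem_coe, OrthonormalBasis.coe_toBasis, EuclideanSpace.basisFun_apply,
    ← append_wfst_wsnd w, ← tmul_single, hx, hy, tmul_add_left, tmul_add_right a']
  exact add_mem (mem_sup_left (mem_sup_left (tmul_mem_tensorSub ha mem_top)))
    (add_mem (mem_sup_left (mem_sup_right (tmul_mem_tensorSub mem_top hb)))
      (mem_sup_right (tmul_mem_tensorSub ha' hb')))

lemma orthogonal_sup_tensorSub_eq (K : Submodule ℂ (TP n m)) (L : Submodule ℂ (TP n k)) :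
    (tensorSub K ⊤ ⊔ tensorSub ⊤ L)ᗮ = tensorSub Kᗮ Lᗮ :=
  orthogonal_eq_of_isOrtho_of_sup_eq_top
    (isOrtho_sup_left.2 ⟨isOrtho_tensorSub_of_isOrtho_left (isOrtho_orthogonal_right K),
      isOrtho_tensorSub_of_isOrtho_right (isOrtho_orthogonal_right L)⟩)
    (sup_tensorSub_orthogonal_eq_top K L)

lemma orthogonal_le_tensorSub_orthogonal {J : Submodule ℂ (TP n (m + k))}
    (hK : ∀ x ∈ K, ∀ y : TP n k, tmul x y ∈ J) (hL : ∀ y ∈ L, ∀ x : TP n m, tmul x y ∈ J) :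
    Jᗮ ≤ tensorSub Kᗮ Lᗮ := by
  rw [← orthogonal_sup_tensorSub_eq]
  exact orthogonal_le <|
    sup_le (tensorSub_le fun x hx y _ => hK x hx y) (tensorSub_le fun x _ y hy => hL y hy x)

end Orthogonality

lemma eq_bot_of_ne_top_of_degree_zero {I : Submodule ℂ (TP n 0)} (hI : I ≠ ⊤) : I = ⊥ :=
  ((is_simple_module_of_finrank_eq_one (K := ℂ) (by simp)).eq_bot_or_eq_top I).resolve_right hI

/-- Subproduct systems correspond to homogeneous two-sided ideals in
`ℂ⟨z_1,…,z_n⟩` (identified with their families of homogeneous components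
`I^{(m)} ⊆ H^{⊗m}`): the orthogonal complements of a subproduct system form a
homogeneous two-sided ideal, and conversely the orthogonal complements of a proper
homogeneous two-sided ideal form a subproduct system. -/
theorem stmt3 {n : ℕ} :
    (∀ (H : ∀ m, Submodule ℂ (TP n m)), IsSubproduct H → ∀ m k : ℕ,
      (∀ x ∈ (H m)ᗮ, ∀ y : TP n k, tmul x y ∈ (H (m + k))ᗮ) ∧
      (∀ x ∈ (H k)ᗮ, ∀ y : TP n m, tmul y x ∈ (H (m + k))ᗮ)) ∧
    (∀ I : ∀ m, Submodule ℂ (TP n m), I 0 ≠ ⊤ →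
      (∀ m k : ℕ, (∀ x ∈ I m, ∀ y : TP n k, tmul x y ∈ I (m + k)) ∧
        (∀ x ∈ I k, ∀ y : TP n m, tmul y x ∈ I (m + k))) →
      IsSubproduct fun m => (I m)ᗮ) := by
  refine ⟨fun H hH m k => ⟨?_, ?_⟩, fun I hI0 hI => ⟨?_, fun m k => ?_⟩⟩
  · exact fun x hx y => tmul_mem_orthogonal_of_mem_orthogonal_left (hH.2 m k) hx y
  · exact fun x hx y => tmul_mem_orthogonal_of_mem_orthogonal_right (hH.2 m k) hx y
  · show (I 0)ᗮ = ⊤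
    rw [eq_bot_of_ne_top_of_degree_zero hI0, bot_orthogonal_eq_top]
  · exact orthogonal_le_tensorSub_orthogonal (hI m k).1 (hI m k).2
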